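/- For all vectors x, y, z in ℝ², the quantity ((x-y)·(x-z))/|x-y| + ((z-y)·(z-x))/|z-y| is nonnegative (where the terms are interpreted as 0 when the denominators vanish). -/

import Mathlib

open scoped RealInnerProductSpace

/- Writing `a = x - y` and `b = z - y`, the sum is `‖a‖ + ‖b‖ - ⟪a, b⟫ (1/‖a‖ + 1/‖b‖)`,
which is nonnegative by Cauchy–Schwarz `⟪a, b⟫ ≤ ‖a‖ ‖b‖`. -/

theorem inner_sub_div_norm_add_inner_sub_div_norm_nonneg {E : Type*} [NormedAddCommGroup E]
    [InnerProductSpace ℝ E] (a b : E) : 0 ≤ ⟪a, a - b⟫ / ‖a‖ + ⟪b, b - a⟫ / ‖b‖ := by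
  rcases eq_or_ne a 0 with rfl | ha
  · simp only [sub_zero, zero_sub, inner_zero_left, inner_neg_right, zero_div, neg_zero, zero_add,
      real_inner_self_eq_norm_sq]
    positivity
  rcases eq_or_ne b 0 with rfl | hb
  · simp only [sub_zero, zero_sub, inner_zero_left, inner_neg_right, zero_div, neg_zero, add_zero,
      real_inner_self_eq_norm_sq]
    positivity
  have cauchy_schwarz : ⟪a, b⟫ * (‖a‖ + ‖b‖) ≤ ‖a‖ * ‖b‖ * (‖a‖ + ‖b‖) :=
    mul_le_mul_of_nonneg_right (real_inner_le_norm a b) (by positivity)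
  rw [inner_sub_right, inner_sub_right, real_inner_self_eq_norm_sq, real_inner_self_eq_norm_sq,
    real_inner_comm a b, div_add_div _ _ (norm_ne_zero_iff.mpr ha) (norm_ne_zero_iff.mpr hb)]
  refine div_nonneg ?_ (by positivity)
  linear_combination cauchy_schwarz

/-- For all x, y, z in ℝ², ((x-y)·(x-z))/|x-y| + ((z-y)·(z-x))/|z-y| ≥ 0
(terms interpreted as 0 when denominators vanish, which matches Lean's
division-by-zero convention since the numerators also vanish then). -/
theorem stmt_0 (x y z : EuclideanSpace ℝ (Fin 2)) :
    0 ≤ (inner ℝ (x - y) (x - z) : ℝ) / ‖x - y‖ + (inner ℝ (z - y) (z - x) : ℝ) / ‖z - y‖ := by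
  have hxz : x - z = (x - y) - (z - y) := by abel
  have hzx : z - x = (z - y) - (x - y) := by abel
  rw [hxz, hzx]
  exact inner_sub_div_norm_add_inner_sub_div_norm_nonneg (x - y) (z - y)
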